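/- Suppose a product operator $K$ on $(0,\infty)^2$ with kernels $k_1,k_2$ has factor operators $K_1,K_2$ bounded as $\|K_jg\|_{L^{r_j}}\le C_j\|g\|_{L^{p_j}}$ (nonnegative $g$), and suppose $r_1\ge 1$, $r_2\ge 1$, $r_1\le r_2$ and $p_2\le p_1$. Then both chains hold: $\|Kf\|_{L^{(r_1,r_2)}}\le C_1C_2\|f\|_{L^{(p_2,p_1)}}\le C_1C_2\|f\|_{L^{(p_1,p_2)}}$ and $\|Kf\|_{L^{(r_1,r_2)}}\le\|Kf\|_{L^{(r_2,r_1)}}\le C_1C_2\|f\|_{L^{(p_1,p_2)}}$, for nonnegative measurable $f$. -/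

import Mathlib

/-!
Write `Kf(x₁, x₂) = ∫ k₁(x₁, t₁) (K₂ f(t₁, ·))(x₂) dt₁`. Minkowski's integral inequality in
`x₂` (exponent `r₂ ≥ 1`) followed by the bound for `K₂` gives, for every `x₁`,
`‖Kf(x₁, ·)‖_{r₂} ≤ C₂ · K₁ ψ (x₁)` with `ψ(t₁) = ‖f(t₁, ·)‖_{p₂}`, and then the bound for `K₁`
gives `‖Kf‖_{(r₂, r₁)} ≤ C₁ C₂ ‖ψ‖_{p₁} = C₁ C₂ ‖f‖_{(p₂, p₁)}`. Both chains follow from this by the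
permutation inequality for mixed norms: moving the smaller exponent inside decreases a mixed
norm, which is Minkowski's inequality applied to the `a`-th power of the function.

Minkowski's inequality itself is proved by the usual Hölder argument
`∫ F^q = ∫∫ g · F^{q-1} ≤ A (∫ F^q)^{1 - 1/q}` with `F = ∫ g dμ` and `A = ∫ ‖g(x, ·)‖_q dμ(x)`.
Dividing requires `∫ F^q < ∞`; this is arranged by truncating `g` in height and to the spanning
sets of the two σ-finite measures, and removed by monotone convergence.
-/

open MeasureTheory ENNReal Set Function

theorem ENNReal.rpow_one_div_le_of_le_mul_rpow {a b : ℝ≥0∞} {p q : ℝ}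
    (hpq : p.HolderConjugate q) (ha : a ≠ ∞) (h : a ≤ b * a ^ (1 / q)) : a ^ (1 / p) ≤ b := by
  rcases eq_or_ne a 0 with rfl | ha0
  · rw [ENNReal.zero_rpow_of_pos hpq.one_div_pos]
    exact zero_le
  have hsplit : a ^ (1 / p) * a ^ (1 / q) = a := by
    rw [← ENNReal.rpow_add _ _ ha0 ha, one_div, one_div, hpq.inv_add_inv_eq_one, ENNReal.rpow_one]
  refine (ENNReal.mul_le_mul_iff_left ?_ ?_).1 (hsplit.le.trans h)
  · exact (ENNReal.rpow_pos (pos_iff_ne_zero.2 ha0) ha).ne'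
  · exact ENNReal.rpow_ne_top_of_nonneg hpq.symm.one_div_nonneg ha

section Minkowski

variable {α β : Type*} [MeasurableSpace α] [MeasurableSpace β] {μ : Measure α} {ν : Measure β}

theorem rpow_one_div_lintegral_const_mul_rpow {f : α → ℝ≥0∞} (hf : Measurable f) (c : ℝ≥0∞)
    {r : ℝ} (hr : 0 < r) :
    (∫⁻ x, (c * f x) ^ r ∂μ) ^ (1 / r) = c * (∫⁻ x, f x ^ r ∂μ) ^ (1 / r) := by
  simp_rw [ENNReal.mul_rpow_of_nonneg _ _ hr.le]
  rw [lintegral_const_mul _ (hf.pow_const r), ENNReal.mul_rpow_of_nonneg _ _ (by positivity),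
    ← ENNReal.rpow_mul, mul_one_div_cancel hr.ne', ENNReal.rpow_one]

theorem lintegral_rpow_lintegral_le_of_ne_top [SFinite μ] [SFinite ν] {g : α → β → ℝ≥0∞}
    (hg : Measurable (uncurry g)) {q : ℝ} (hq : 1 < q)
    (hfin : ∫⁻ y, (∫⁻ x, g x y ∂μ) ^ q ∂ν ≠ ∞) :
    (∫⁻ y, (∫⁻ x, g x y ∂μ) ^ q ∂ν) ^ (1 / q) ≤ ∫⁻ x, (∫⁻ y, g x y ^ q ∂ν) ^ (1 / q) ∂μ := by
  have hqq' : q.HolderConjugate q.conjExponent := .conjExponent hq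
  set F : β → ℝ≥0∞ := fun y => ∫⁻ x, g x y ∂μ
  have hF : Measurable F := hg.lintegral_prod_left
  have hpow : ∀ a : ℝ≥0∞, a ^ q = a * a ^ (q - 1) := fun a => by
    simpa using ENNReal.rpow_add_of_nonneg (x := a) 1 (q - 1) zero_le_one (by linarith)
  refine ENNReal.rpow_one_div_le_of_le_mul_rpow hqq' hfin ?_
  calc ∫⁻ y, F y ^ q ∂ν = ∫⁻ y, ∫⁻ x, g x y * F y ^ (q - 1) ∂μ ∂ν := by
        refine lintegral_congr fun y => ?_
        rw [lintegral_mul_const _ hg.of_uncurry_right, hpow]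
    _ = ∫⁻ x, ∫⁻ y, g x y * F y ^ (q - 1) ∂ν ∂μ :=
        lintegral_lintegral_swap
          ((hg.comp measurable_swap).mul ((hF.pow_const _).comp measurable_fst)).aemeasurable
    _ ≤ ∫⁻ x, (∫⁻ y, g x y ^ q ∂ν) ^ (1 / q) * (∫⁻ y, F y ^ q ∂ν) ^ (1 / q.conjExponent) ∂μ := by
        refine lintegral_mono fun x => ?_
        have holder := ENNReal.lintegral_mul_le_Lp_mul_Lq ν hqq'
          (hg.of_uncurry_left (x := x)).aemeasurable (hF.pow_const (q - 1)).aemeasurable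
        simp only [Pi.mul_apply, ← ENNReal.rpow_mul, hqq'.sub_one_mul_conj] at holder
        exact holder
    _ = (∫⁻ x, (∫⁻ y, g x y ^ q ∂ν) ^ (1 / q) ∂μ) * (∫⁻ y, F y ^ q ∂ν) ^ (1 / q.conjExponent) :=
        lintegral_mul_const _ (((hg.pow_const q).lintegral_prod_right).pow_const _)

theorem lintegral_rpow_lintegral_eq_iSup [SFinite μ] {g : ℕ → α → β → ℝ≥0∞}
    {f : α → β → ℝ≥0∞} (hg : ∀ n, Measurable (uncurry (g n))) (hmono : Monotone g)
    (hsup : ∀ x y, ⨆ n, g n x y = f x y) {q : ℝ} (hq : 0 < q) :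
    ∫⁻ y, (∫⁻ x, f x y ∂μ) ^ q ∂ν = ⨆ n, ∫⁻ y, (∫⁻ x, g n x y ∂μ) ^ q ∂ν := by
  have hinner : ∀ y, (∫⁻ x, f x y ∂μ) ^ q = ⨆ n, (∫⁻ x, g n x y ∂μ) ^ q := fun y => by
    simp_rw [← hsup]
    rw [lintegral_iSup (fun n => (hg n).of_uncurry_right) (fun m n h x => hmono h x y)]
    simpa only [ENNReal.orderIsoRpow_apply] using (ENNReal.orderIsoRpow q hq).map_iSup _
  rw [lintegral_congr hinner]
  exact lintegral_iSup (fun n => (hg n).lintegral_prod_left.pow_const q)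
    (fun m n h y => ENNReal.rpow_le_rpow (lintegral_mono fun x => hmono h x y) hq.le)

noncomputable def spanningTruncation (μ : Measure α) (ν : Measure β) [SigmaFinite μ]
    [SigmaFinite ν] (g : α → β → ℝ≥0∞) (n : ℕ) (x : α) (y : β) : ℝ≥0∞ :=
  min ((spanningSets μ n ×ˢ spanningSets ν n).indicator (uncurry g) (x, y)) n

variable [SigmaFinite μ] [SigmaFinite ν]

theorem measurable_spanningTruncation {g : α → β → ℝ≥0∞} (hg : Measurable (uncurry g)) (n : ℕ) :
    Measurable (uncurry (spanningTruncation μ ν g n)) :=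
  (hg.indicator ((measurableSet_spanningSets μ n).prod (measurableSet_spanningSets ν n))).min
    measurable_const

theorem monotone_indicator_spanningSets_prod (g : α → β → ℝ≥0∞) (x : α) (y : β) :
    Monotone fun n => (spanningSets μ n ×ˢ spanningSets ν n).indicator (uncurry g) (x, y) :=
  fun _ _ hmn => indicator_le_indicator_of_subset
    (prod_mono (monotone_spanningSets μ hmn) (monotone_spanningSets ν hmn)) (fun _ => zero_le) _

theorem monotone_spanningTruncation (g : α → β → ℝ≥0∞) :
    Monotone (spanningTruncation μ ν g) := fun _ _ hmn x y =>
  min_le_min (monotone_indicator_spanningSets_prod g x y hmn) (by exact_mod_cast hmn)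

theorem spanningTruncation_le (g : α → β → ℝ≥0∞) (n : ℕ) (x : α) (y : β) :
    spanningTruncation μ ν g n x y ≤ g x y :=
  (min_le_left _ _).trans (indicator_le_self _ _ _)

theorem iSup_spanningTruncation (g : α → β → ℝ≥0∞) (x : α) (y : β) :
    ⨆ n, spanningTruncation μ ν g n x y = g x y := by
  have hind : ⨆ n, (spanningSets μ n ×ˢ spanningSets ν n).indicator (uncurry g) (x, y) = g x y := by
    rw [← indicator_iUnion_apply rfl, iUnion_prod_of_monotone (monotone_spanningSets μ)
      (monotone_spanningSets ν), iUnion_spanningSets, iUnion_spanningSets, univ_prod_univ,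
      indicator_univ, uncurry_apply_pair]
  simp only [spanningTruncation]
  rw [iSup_inf_of_monotone (monotone_indicator_spanningSets_prod g x y) Nat.mono_cast, hind,
    ENNReal.iSup_natCast, inf_top_eq]

theorem lintegral_spanningTruncation_le (g : α → β → ℝ≥0∞) (n : ℕ) (y : β) :
    ∫⁻ x, spanningTruncation μ ν g n x y ∂μ
      ≤ (spanningSets ν n).indicator (fun _ => n * μ (spanningSets μ n)) y := by
  by_cases hy : y ∈ spanningSets ν n
  · rw [indicator_of_mem hy, ← lintegral_indicator_const (measurableSet_spanningSets μ n)]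
    refine lintegral_mono fun x => ?_
    by_cases hx : x ∈ spanningSets μ n
    · rw [indicator_of_mem hx]
      exact min_le_right _ _
    · simp [spanningTruncation, hx]
  · simp [spanningTruncation, hy]

theorem lintegral_rpow_lintegral_spanningTruncation_ne_top (g : α → β → ℝ≥0∞) (n : ℕ) {q : ℝ}
    (hq : 0 < q) : ∫⁻ y, (∫⁻ x, spanningTruncation μ ν g n x y ∂μ) ^ q ∂ν ≠ ∞ := by
  have hbound : ∀ y, (∫⁻ x, spanningTruncation μ ν g n x y ∂μ) ^ q
      ≤ (spanningSets ν n).indicator (fun _ => ((n : ℝ≥0∞) * μ (spanningSets μ n)) ^ q) y := by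
    intro y
    grw [lintegral_spanningTruncation_le g n y]
    by_cases hy : y ∈ spanningSets ν n
    · simp [hy]
    · simp [hy, ENNReal.zero_rpow_of_pos hq]
  refine ne_top_of_le_ne_top ?_ ((lintegral_mono hbound).trans_eq
    (lintegral_indicator_const (measurableSet_spanningSets ν n) _))
  refine mul_ne_top (rpow_ne_top_of_nonneg hq.le ?_) (measure_spanningSets_lt_top ν n).ne
  exact mul_ne_top (natCast_ne_top n) (measure_spanningSets_lt_top μ n).ne

/-- **Minkowski's integral inequality**. -/
theorem lintegral_rpow_lintegral_le {g : α → β → ℝ≥0∞} (hg : Measurable (uncurry g)) {q : ℝ}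
    (hq : 1 ≤ q) :
    (∫⁻ y, (∫⁻ x, g x y ∂μ) ^ q ∂ν) ^ (1 / q) ≤ ∫⁻ x, (∫⁻ y, g x y ^ q ∂ν) ^ (1 / q) ∂μ := by
  rcases hq.eq_or_lt with rfl | hq
  · simpa using
      (lintegral_lintegral_swap (f := fun y x => g x y) (hg.comp measurable_swap).aemeasurable).le
  have hq0 : 0 < q := one_pos.trans hq
  rw [one_div, ENNReal.rpow_inv_le_iff hq0,
    lintegral_rpow_lintegral_eq_iSup (measurable_spanningTruncation (μ := μ) (ν := ν) hg)
      (monotone_spanningTruncation g) (iSup_spanningTruncation g) hq0]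
  refine iSup_le fun n => (ENNReal.rpow_inv_le_iff hq0).1 ?_
  rw [← one_div]
  refine (lintegral_rpow_lintegral_le_of_ne_top (measurable_spanningTruncation hg n) hq
    (lintegral_rpow_lintegral_spanningTruncation_ne_top g n hq0)).trans ?_
  gcongr with x y
  exact spanningTruncation_le g n x y

end Minkowski

section MixedNorm

variable {α β : Type*} [MeasurableSpace α] [MeasurableSpace β]

/-- The paper's `‖F‖_{L^(a,b)}`. -/
noncomputable def mixedLpNorm (μ : Measure α) (ν : Measure β) (a b : ℝ) (F : α → β → ℝ≥0∞) :
    ℝ≥0∞ :=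
  (∫⁻ y, (∫⁻ x, F x y ^ a ∂μ) ^ (b / a) ∂ν) ^ (1 / b)

theorem mixedLpNorm_le_mixedLpNorm_flip {μ : Measure α} {ν : Measure β} [SigmaFinite μ]
    [SigmaFinite ν] {F : α → β → ℝ≥0∞} (hF : Measurable (uncurry F)) {a b : ℝ} (ha : 0 < a)
    (hab : a ≤ b) : mixedLpNorm μ ν a b F ≤ mixedLpNorm ν μ b a (flip F) := by
  have key := lintegral_rpow_lintegral_le (μ := μ) (ν := ν) (g := fun x y => F x y ^ a)
    (hF.pow_const a) ((one_le_div ha).2 hab)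
  simp only [← ENNReal.rpow_mul, mul_div_cancel₀ b ha.ne', one_div_div] at key
  calc mixedLpNorm μ ν a b F
      = ((∫⁻ y, (∫⁻ x, F x y ^ a ∂μ) ^ (b / a) ∂ν) ^ (a / b)) ^ (1 / a) := by
        rw [mixedLpNorm, ← ENNReal.rpow_mul]
        congr 1
        field_simp
    _ ≤ mixedLpNorm ν μ b a (flip F) := ENNReal.rpow_le_rpow key (by positivity)

end MixedNorm

section ProductOperator

variable {X₁ X₂ T₁ T₂ : Type*} [MeasurableSpace T₁] [MeasurableSpace T₂] {μ₁ : Measure T₁}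
  {μ₂ : Measure T₂} {k₁ : X₁ → T₁ → ℝ≥0∞} {k₂ : X₂ → T₂ → ℝ≥0∞} {f : T₁ × T₂ → ℝ≥0∞}

noncomputable def productOperator (μ₁ : Measure T₁) (μ₂ : Measure T₂) (k₁ : X₁ → T₁ → ℝ≥0∞)
    (k₂ : X₂ → T₂ → ℝ≥0∞) (f : T₁ × T₂ → ℝ≥0∞) (x₁ : X₁) (x₂ : X₂) : ℝ≥0∞ :=
  ∫⁻ t₂, ∫⁻ t₁, k₁ x₁ t₁ * k₂ x₂ t₂ * f (t₁, t₂) ∂μ₁ ∂μ₂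

theorem productOperator_eq_lintegral_mul_lintegral [SFinite μ₁] [SFinite μ₂] {x₁ : X₁} {x₂ : X₂}
    (hk₁ : Measurable (k₁ x₁)) (hk₂ : Measurable (k₂ x₂)) (hf : Measurable f) :
    productOperator μ₁ μ₂ k₁ k₂ f x₁ x₂
      = ∫⁻ t₁, k₁ x₁ t₁ * ∫⁻ t₂, k₂ x₂ t₂ * f (t₁, t₂) ∂μ₂ ∂μ₁ := by
  rw [productOperator, lintegral_lintegral_swap
    (f := fun t₂ t₁ => k₁ x₁ t₁ * k₂ x₂ t₂ * f (t₁, t₂)) (by fun_prop)]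
  refine lintegral_congr fun t₁ => ?_
  rw [← lintegral_const_mul _ (f := fun t₂ => k₂ x₂ t₂ * f (t₁, t₂)) (by fun_prop)]
  simp only [mul_assoc]

variable [MeasurableSpace X₂] {ν₂ : Measure X₂}

theorem rpow_lintegral_productOperator_le [SigmaFinite μ₁] [SFinite μ₂] [SigmaFinite ν₂]
    {r₂ p₂ : ℝ} {C₂ : ℝ≥0∞} (hk₂ : Measurable (uncurry k₂)) (hf : Measurable f) (hr₂ : 1 ≤ r₂)
    (hK₂ : ∀ g : T₂ → ℝ≥0∞, Measurable g →
      (∫⁻ x, (∫⁻ t, k₂ x t * g t ∂μ₂) ^ r₂ ∂ν₂) ^ (1 / r₂) ≤ C₂ * (∫⁻ t, g t ^ p₂ ∂μ₂) ^ (1 / p₂))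
    {x₁ : X₁} (hk₁ : Measurable (k₁ x₁)) :
    (∫⁻ x₂, productOperator μ₁ μ₂ k₁ k₂ f x₁ x₂ ^ r₂ ∂ν₂) ^ (1 / r₂)
      ≤ C₂ * ∫⁻ t₁, k₁ x₁ t₁ * (∫⁻ t₂, f (t₁, t₂) ^ p₂ ∂μ₂) ^ (1 / p₂) ∂μ₁ := by
  have hk₂' : Measurable fun p : X₂ × T₂ => k₂ p.1 p.2 := hk₂
  set G : T₁ → X₂ → ℝ≥0∞ := fun t₁ x₂ => ∫⁻ t₂, k₂ x₂ t₂ * f (t₁, t₂) ∂μ₂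
  have hG : Measurable (uncurry G) := Measurable.lintegral_prod_right'
    (f := fun w : (T₁ × X₂) × T₂ => k₂ w.1.2 w.2 * f (w.1.1, w.2)) (by fun_prop)
  have hψ : Measurable fun t₁ => (∫⁻ t₂, f (t₁, t₂) ^ p₂ ∂μ₂) ^ (1 / p₂) :=
    ((hf.pow_const p₂).lintegral_prod_right').pow_const _
  simp_rw [productOperator_eq_lintegral_mul_lintegral hk₁ hk₂.of_uncurry_left hf]
  calc (∫⁻ x₂, (∫⁻ t₁, k₁ x₁ t₁ * G t₁ x₂ ∂μ₁) ^ r₂ ∂ν₂) ^ (1 / r₂)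
      ≤ ∫⁻ t₁, (∫⁻ x₂, (k₁ x₁ t₁ * G t₁ x₂) ^ r₂ ∂ν₂) ^ (1 / r₂) ∂μ₁ :=
        lintegral_rpow_lintegral_le (g := fun t₁ x₂ => k₁ x₁ t₁ * G t₁ x₂) (by fun_prop) hr₂
    _ = ∫⁻ t₁, k₁ x₁ t₁ * (∫⁻ x₂, G t₁ x₂ ^ r₂ ∂ν₂) ^ (1 / r₂) ∂μ₁ := lintegral_congr fun t₁ =>
        rpow_one_div_lintegral_const_mul_rpow hG.of_uncurry_left _ (by linarith)
    _ ≤ ∫⁻ t₁, C₂ * (k₁ x₁ t₁ * (∫⁻ t₂, f (t₁, t₂) ^ p₂ ∂μ₂) ^ (1 / p₂)) ∂μ₁ := by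
        refine lintegral_mono fun t₁ => ?_
        rw [mul_left_comm]
        gcongr
        exact hK₂ _ (by fun_prop)
    _ = C₂ * ∫⁻ t₁, k₁ x₁ t₁ * (∫⁻ t₂, f (t₁, t₂) ^ p₂ ∂μ₂) ^ (1 / p₂) ∂μ₁ :=
        lintegral_const_mul _ (hk₁.mul hψ)

variable [MeasurableSpace X₁] {ν₁ : Measure X₁}

theorem measurable_productOperator [SFinite μ₁] [SFinite μ₂] (hk₁ : Measurable (uncurry k₁))
    (hk₂ : Measurable (uncurry k₂)) (hf : Measurable f) :
    Measurable (uncurry (productOperator μ₁ μ₂ k₁ k₂ f)) := by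
  have hk₁' : Measurable fun p : X₁ × T₁ => k₁ p.1 p.2 := hk₁
  have hk₂' : Measurable fun p : X₂ × T₂ => k₂ p.1 p.2 := hk₂
  refine Measurable.lintegral_prod_right' (ν := μ₂)
    (f := fun z : (X₁ × X₂) × T₂ => ∫⁻ t₁, k₁ z.1.1 t₁ * k₂ z.1.2 z.2 * f (t₁, z.2) ∂μ₁)
    (Measurable.lintegral_prod_right'
      (f := fun w : ((X₁ × X₂) × T₂) × T₁ => k₁ w.1.1.1 w.2 * k₂ w.1.1.2 w.1.2 * f (w.2, w.1.2))
      (by fun_prop))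

theorem mixedLpNorm_productOperator_le [SigmaFinite μ₁] [SFinite μ₂] [SigmaFinite ν₂]
    {r₁ r₂ p₁ p₂ : ℝ} {C₁ C₂ : ℝ≥0∞} (hk₁ : Measurable (uncurry k₁))
    (hk₂ : Measurable (uncurry k₂)) (hf : Measurable f) (hr₁ : 0 < r₁) (hr₂ : 1 ≤ r₂)
    (hK₁ : ∀ g : T₁ → ℝ≥0∞, Measurable g →
      (∫⁻ x, (∫⁻ t, k₁ x t * g t ∂μ₁) ^ r₁ ∂ν₁) ^ (1 / r₁) ≤ C₁ * (∫⁻ t, g t ^ p₁ ∂μ₁) ^ (1 / p₁))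
    (hK₂ : ∀ g : T₂ → ℝ≥0∞, Measurable g →
      (∫⁻ x, (∫⁻ t, k₂ x t * g t ∂μ₂) ^ r₂ ∂ν₂) ^ (1 / r₂) ≤ C₂ * (∫⁻ t, g t ^ p₂ ∂μ₂) ^ (1 / p₂)) :
    mixedLpNorm ν₂ ν₁ r₂ r₁ (fun x₂ x₁ => productOperator μ₁ μ₂ k₁ k₂ f x₁ x₂)
      ≤ C₁ * C₂ * mixedLpNorm μ₂ μ₁ p₂ p₁ (fun t₂ t₁ => f (t₁, t₂)) := by
  set ψ : T₁ → ℝ≥0∞ := fun t₁ => (∫⁻ t₂, f (t₁, t₂) ^ p₂ ∂μ₂) ^ (1 / p₂)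
  have hψ : Measurable ψ := ((hf.pow_const p₂).lintegral_prod_right').pow_const _
  have hK₁ψ : Measurable fun x₁ => ∫⁻ t₁, k₁ x₁ t₁ * ψ t₁ ∂μ₁ :=
    Measurable.lintegral_prod_right' (f := fun w : X₁ × T₁ => k₁ w.1 w.2 * ψ w.2)
      (hk₁.mul (hψ.comp measurable_snd))
  calc mixedLpNorm ν₂ ν₁ r₂ r₁ (fun x₂ x₁ => productOperator μ₁ μ₂ k₁ k₂ f x₁ x₂)
      ≤ (∫⁻ x₁, (C₂ * ∫⁻ t₁, k₁ x₁ t₁ * ψ t₁ ∂μ₁) ^ r₁ ∂ν₁) ^ (1 / r₁) := by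
        rw [mixedLpNorm]
        gcongr with x₁
        rw [div_eq_mul_one_div r₁ r₂, mul_comm, ENNReal.rpow_mul]
        gcongr
        exact rpow_lintegral_productOperator_le hk₂ hf hr₂ hK₂ hk₁.of_uncurry_left
    _ = C₂ * (∫⁻ x₁, (∫⁻ t₁, k₁ x₁ t₁ * ψ t₁ ∂μ₁) ^ r₁ ∂ν₁) ^ (1 / r₁) :=
        rpow_one_div_lintegral_const_mul_rpow hK₁ψ C₂ hr₁
    _ ≤ C₂ * (C₁ * (∫⁻ t₁, ψ t₁ ^ p₁ ∂μ₁) ^ (1 / p₁)) := by grw [hK₁ ψ hψ]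
    _ = C₁ * C₂ * mixedLpNorm μ₂ μ₁ p₂ p₁ (fun t₂ t₁ => f (t₁, t₂)) := by
        simp only [mixedLpNorm, ψ, ← ENNReal.rpow_mul, one_div_mul_eq_div]
        ring

end ProductOperator

/-- For a product operator on `(0,∞)²` with `1 ≤ r₁ ≤ r₂` and `p₂ ≤ p₁`, the permuted
mixed norm inequality refines the unpermuted one in two different ways. -/
theorem product_operator_two_refinements
    (k1 k2 : ℝ → ℝ → ℝ≥0∞)
    (hk1 : Measurable fun p : ℝ × ℝ => k1 p.1 p.2)
    (hk2 : Measurable fun p : ℝ × ℝ => k2 p.1 p.2)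
    (p1 p2 r1 r2 : ℝ) (C1 C2 : ℝ≥0∞)
    (hp2 : 0 < p2) (hp21 : p2 ≤ p1) (hr1 : 1 ≤ r1) (hr2 : 1 ≤ r2) (hr12 : r1 ≤ r2)
    (hK1 : ∀ g : ℝ → ℝ≥0∞, Measurable g →
      (∫⁻ x in Ioi (0 : ℝ), (∫⁻ t in Ioi (0 : ℝ), k1 x t * g t) ^ r1) ^ (1 / r1)
        ≤ C1 * (∫⁻ t in Ioi (0 : ℝ), g t ^ p1) ^ (1 / p1))
    (hK2 : ∀ g : ℝ → ℝ≥0∞, Measurable g →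
      (∫⁻ x in Ioi (0 : ℝ), (∫⁻ t in Ioi (0 : ℝ), k2 x t * g t) ^ r2) ^ (1 / r2)
        ≤ C2 * (∫⁻ t in Ioi (0 : ℝ), g t ^ p2) ^ (1 / p2))
    (f : ℝ × ℝ → ℝ≥0∞) (hf : Measurable f) :
    ((∫⁻ x2 in Ioi (0 : ℝ), (∫⁻ x1 in Ioi (0 : ℝ),
          (∫⁻ t2 in Ioi (0 : ℝ), ∫⁻ t1 in Ioi (0 : ℝ),
              k1 x1 t1 * k2 x2 t2 * f (t1, t2)) ^ r1) ^ (r2 / r1)) ^ (1 / r2)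
        ≤ C1 * C2 * (∫⁻ t1 in Ioi (0 : ℝ),
            (∫⁻ t2 in Ioi (0 : ℝ), f (t1, t2) ^ p2) ^ (p1 / p2)) ^ (1 / p1)
      ∧ C1 * C2 * (∫⁻ t1 in Ioi (0 : ℝ),
            (∫⁻ t2 in Ioi (0 : ℝ), f (t1, t2) ^ p2) ^ (p1 / p2)) ^ (1 / p1)
        ≤ C1 * C2 * (∫⁻ t2 in Ioi (0 : ℝ),
            (∫⁻ t1 in Ioi (0 : ℝ), f (t1, t2) ^ p1) ^ (p2 / p1)) ^ (1 / p2))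
    ∧ ((∫⁻ x2 in Ioi (0 : ℝ), (∫⁻ x1 in Ioi (0 : ℝ),
          (∫⁻ t2 in Ioi (0 : ℝ), ∫⁻ t1 in Ioi (0 : ℝ),
              k1 x1 t1 * k2 x2 t2 * f (t1, t2)) ^ r1) ^ (r2 / r1)) ^ (1 / r2)
        ≤ (∫⁻ x1 in Ioi (0 : ℝ), (∫⁻ x2 in Ioi (0 : ℝ),
          (∫⁻ t2 in Ioi (0 : ℝ), ∫⁻ t1 in Ioi (0 : ℝ),
              k1 x1 t1 * k2 x2 t2 * f (t1, t2)) ^ r2) ^ (r1 / r2)) ^ (1 / r1)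
      ∧ (∫⁻ x1 in Ioi (0 : ℝ), (∫⁻ x2 in Ioi (0 : ℝ),
          (∫⁻ t2 in Ioi (0 : ℝ), ∫⁻ t1 in Ioi (0 : ℝ),
              k1 x1 t1 * k2 x2 t2 * f (t1, t2)) ^ r2) ^ (r1 / r2)) ^ (1 / r1)
        ≤ C1 * C2 * (∫⁻ t2 in Ioi (0 : ℝ),
            (∫⁻ t1 in Ioi (0 : ℝ), f (t1, t2) ^ p1) ^ (p2 / p1)) ^ (1 / p2)) := by
  set μ : Measure ℝ := volume.restrict (Ioi 0)
  have hr1' : 0 < r1 := one_pos.trans_le hr1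
  have hKf : mixedLpNorm μ μ r1 r2 (productOperator μ μ k1 k2 f)
      ≤ mixedLpNorm μ μ r2 r1 (fun x2 x1 => productOperator μ μ k1 k2 f x1 x2) :=
    mixedLpNorm_le_mixedLpNorm_flip (measurable_productOperator hk1 hk2 hf) hr1' hr12
  have hf_flip : C1 * C2 * mixedLpNorm μ μ p2 p1 (fun t2 t1 => f (t1, t2))
      ≤ C1 * C2 * mixedLpNorm μ μ p1 p2 (curry f) :=
    mul_le_mul_right (mixedLpNorm_le_mixedLpNorm_flip (F := fun t2 t1 => f (t1, t2))
      (hf.comp measurable_swap) hp2 hp21) _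
  have hKf_bound := mixedLpNorm_productOperator_le hk1 hk2 hf hr1' hr2 hK1 hK2
  exact ⟨⟨hKf.trans hKf_bound, hf_flip⟩, hKf, hKf_bound.trans hf_flip⟩
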